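/- arXiv:2407.11670 — 2 statements merged into one kernel-verified Lean document; each statement's English description precedes it below -/
import Mathlib

section
/- Let m, b be positive integers; let ρ > 0, P > 0 be reals, and let a_1 ≥ a_2 ≥ … ≥ a_b ≥ 0 be reals satisfying a_k ≤ (ρP − ∑_{j=1}^{k−1} a_j)/m for all 1 ≤ k ≤ b. Let s_1, …, s_m ≥ 0 be reals with ∑_i s_i = P. Then there exists a partition of {1,…,b} into sets M_1, …, M_m such that for every i, ∑_{k ∈ M_i} a_k ≤ ρ·s_i. -/
noncomputable def amax (m : ℕ) (g : ℕ → ℝ) : ℕ :=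
  if h : (Finset.Icc 1 m).Nonempty then
    (Finset.exists_max_image (Finset.Icc 1 m) g h).choose else 1

lemma amax_mem (m : ℕ) (hm : 1 ≤ m) (g : ℕ → ℝ) : amax m g ∈ Finset.Icc 1 m := by
  have h : (Finset.Icc 1 m).Nonempty := ⟨1, by simp [hm]⟩
  rw [amax, dif_pos h]
  exact (Finset.exists_max_image (Finset.Icc 1 m) g h).choose_spec.1

lemma amax_spec (m : ℕ) (hm : 1 ≤ m) (g : ℕ → ℝ) :
    ∀ j ∈ Finset.Icc 1 m, g j ≤ g (amax m g) := by
  have h : (Finset.Icc 1 m).Nonempty := ⟨1, by simp [hm]⟩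
  rw [amax, dif_pos h]
  exact (Finset.exists_max_image (Finset.Icc 1 m) g h).choose_spec.2

noncomputable def loads (m : ℕ) (c a : ℕ → ℝ) : ℕ → ℕ → ℝ
  | 0 => fun _ => 0
  | k+1 => fun i =>
      loads m c a k i +
        if i = amax m (fun j => c j - loads m c a k j) then a (k+1) else 0

noncomputable def pick (m : ℕ) (c a : ℕ → ℝ) (k : ℕ) : ℕ :=
  amax m (fun j => c j - loads m c a (k-1) j)

lemma loads_sum (m : ℕ) (hm : 1 ≤ m) (c a : ℕ → ℝ) (k : ℕ) :
    ∑ i ∈ Finset.Icc 1 m, loads m c a k i = ∑ j ∈ Finset.Icc 1 k, a j := by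
  induction k with
  | zero => simp [loads]
  | succ k ih =>
    rw [Finset.sum_Icc_succ_top (by omega : 1 ≤ k+1)]
    simp only [loads]
    rw [Finset.sum_add_distrib, ih, Finset.sum_ite_eq' (Finset.Icc 1 m)]
    rw [if_pos (amax_mem m hm _)]

lemma loads_eq (m : ℕ) (c a : ℕ → ℝ) (k i : ℕ) :
    loads m c a k i
      = ∑ j ∈ (Finset.Icc 1 k).filter (fun j => pick m c a j = i), a j := by
  induction k with
  | zero => simp [loads]
  | succ k ih =>
    rw [Finset.sum_filter, Finset.sum_Icc_succ_top (by omega : 1 ≤ k+1),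
      ← Finset.sum_filter, ← ih]
    simp only [loads, pick, Nat.add_sub_cancel]
    congr 1
    by_cases h : amax m (fun j => c j - loads m c a k j) = i
    · simp [h]
    · simp [h, Ne.symm h]

lemma loads_le (m b : ℕ) (hm : 1 ≤ m)
    (ρ P : ℝ) (hρ : 0 < ρ) (a : ℕ → ℝ)
    (hcond : ∀ k, 1 ≤ k → k ≤ b →
      a k ≤ (ρ * P - ∑ j ∈ Finset.Icc 1 (k - 1), a j) / m)
    (s : ℕ → ℝ) (hs0 : ∀ i, 0 ≤ s i)
    (hsum : ∑ i ∈ Finset.Icc 1 m, s i = P) :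
    ∀ k, k ≤ b → ∀ i ∈ Finset.Icc 1 m,
      loads m (fun i => ρ * s i) a k i ≤ ρ * s i := by
  set c : ℕ → ℝ := fun i => ρ * s i with hc
  intro k
  induction k with
  | zero => intro _ i _; simp only [loads]; exact mul_nonneg hρ.le (hs0 i)
  | succ k ih =>
    intro hkb i hi
    have hk : k ≤ b := Nat.le_of_succ_le hkb
    set i0 := amax m (fun j => c j - loads m c a k j) with hi0
    have hmR : (0:ℝ) < (m:ℝ) := by exact_mod_cast Nat.lt_of_lt_of_le Nat.zero_lt_one hm
    have hgap : a (k+1) ≤ c i0 - loads m c a k i0 := by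
      have hsum2 : ∑ i ∈ Finset.Icc 1 m, (c i - loads m c a k i)
          = ρ * P - ∑ j ∈ Finset.Icc 1 k, a j := by
        rw [Finset.sum_sub_distrib, loads_sum m hm, hc, ← Finset.mul_sum, hsum]
      have hmax := amax_spec m hm (fun j => c j - loads m c a k j)
      have h1 : ρ * P - ∑ j ∈ Finset.Icc 1 k, a j
          ≤ (m:ℝ) * (c i0 - loads m c a k i0) := by
        rw [← hsum2]
        calc ∑ i ∈ Finset.Icc 1 m, (c i - loads m c a k i)
            ≤ ∑ i ∈ Finset.Icc 1 m, (c i0 - loads m c a k i0) :=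
              Finset.sum_le_sum (fun i hi => hmax i hi)
          _ = (m:ℝ) * (c i0 - loads m c a k i0) := by
              rw [Finset.sum_const, Nat.card_Icc]; simp [nsmul_eq_mul]
      have h2 := hcond (k+1) (by omega) hkb
      simp only [Nat.add_sub_cancel] at h2
      calc a (k+1) ≤ (ρ * P - ∑ j ∈ Finset.Icc 1 k, a j) / m := h2
        _ ≤ ((m:ℝ) * (c i0 - loads m c a k i0)) / m := by
            gcongr
        _ = c i0 - loads m c a k i0 := by field_simp
    simp only [loads, ← hi0]
    by_cases h : i = i0
    · subst h
      have h2 := ih hk i0 hi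
      have hce : c i0 = ρ * s i0 := rfl
      rw [if_pos rfl]
      linarith
    · simp only [if_neg h, add_zero]
      exact ih hk i hi

theorem greedy_assignment (m b : ℕ) (hm : 1 ≤ m) (hb : 1 ≤ b)
    (ρ P : ℝ) (hρ : 0 < ρ) (hP : 0 < P)
    (a : ℕ → ℝ) (ha0 : ∀ k, 0 ≤ a k)
    (hmono : ∀ j k, 1 ≤ j → j ≤ k → k ≤ b → a k ≤ a j)
    (hcond : ∀ k, 1 ≤ k → k ≤ b →
      a k ≤ (ρ * P - ∑ j ∈ Finset.Icc 1 (k - 1), a j) / m)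
    (s : ℕ → ℝ) (hs0 : ∀ i, 0 ≤ s i)
    (hsum : ∑ i ∈ Finset.Icc 1 m, s i = P) :
    ∃ f : ℕ → ℕ, (∀ k, 1 ≤ k → k ≤ b → f k ∈ Finset.Icc 1 m) ∧
      ∀ i ∈ Finset.Icc 1 m,
        ∑ k ∈ (Finset.Icc 1 b).filter (fun k => f k = i), a k ≤ ρ * s i := by
  refine ⟨pick m (fun i => ρ * s i) a, fun k _ _ => amax_mem m hm _, fun i hi => ?_⟩
  rw [← loads_eq]
  exact loads_le m b hm ρ P hρ a hcond s hs0 hsum b le_rfl i hi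
end

section
/- Let m ≥ 1, b ≥ 1, ρ̄ > 0 be reals and define a_k = ρ̄ − (1/m)∑_{j=1}^{k−1} a_j for 1 ≤ k ≤ b. Suppose d_1, …, d_b are nonnegative reals satisfying d_k > ρ̄ − (1/m)∑_{j=1}^{k−1} d_j for all 1 ≤ k ≤ b. Then for every k with 0 ≤ k ≤ b, ∑_{j=1}^{k} d_j ≥ ∑_{j=1}^{k} a_j. -/
/-! Write `D k = ∑_{j ≤ k} (d j - a j)`. Comparing the two recurrences gives
`d (k+1) - a (k+1) ≥ -(1/m) D k`, hence `D (k+1) ≥ (1 - 1/m) D k`, and `1/m ≤ 1` propagates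
`D k ≥ 0` from `D 0 = 0`. -/

open Finset

theorem sum_Icc_le_sum_Icc_of_add_mul_le {a d : ℕ → ℝ} {c : ℝ} (hc : c ≤ 1) {b : ℕ}
    (hstep : ∀ k < b,
      a (k + 1) + c * ∑ j ∈ Icc 1 k, a j ≤ d (k + 1) + c * ∑ j ∈ Icc 1 k, d j) :
    ∀ k ≤ b, ∑ j ∈ Icc 1 k, a j ≤ ∑ j ∈ Icc 1 k, d j := by
  intro k hk
  induction k with
  | zero => simp
  | succ n ih =>
    have hgap : 0 ≤ ∑ j ∈ Icc 1 n, d j - ∑ j ∈ Icc 1 n, a j := sub_nonneg.2 (ih (by omega))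
    have hshrink := mul_nonneg (sub_nonneg.2 hc) hgap
    rw [sum_Icc_succ_top (by omega), sum_Icc_succ_top (by omega)]
    linarith [hstep n (by omega)]

theorem pebbles_prefix_domination_general (m : ℝ) (hm : 1 ≤ m) (b : ℕ)
    (ρ : ℝ)
    (a : ℕ → ℝ)
    (ha : ∀ k, 1 ≤ k → k ≤ b →
      a k = ρ - (1 / m) * ∑ j ∈ Finset.Icc 1 (k - 1), a j)
    (d : ℕ → ℝ)
    (hd : ∀ k, 1 ≤ k → k ≤ b →
      d k > ρ - (1 / m) * ∑ j ∈ Finset.Icc 1 (k - 1), d j) :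
    ∀ k, k ≤ b → ∑ j ∈ Finset.Icc 1 k, d j ≥ ∑ j ∈ Finset.Icc 1 k, a j := by
  have hm_inv : 1 / m ≤ 1 := (div_le_one (by linarith)).2 hm
  refine sum_Icc_le_sum_Icc_of_add_mul_le hm_inv fun k hk => ?_
  have hak := ha (k + 1) (by omega) hk
  have hdk := hd (k + 1) (by omega) hk
  rw [Nat.add_sub_cancel] at hak hdk
  linarith

theorem pebbles_prefix_domination (m : ℝ) (hm : 1 ≤ m) (b : ℕ) (hb : 1 ≤ b)
    (ρ : ℝ) (hρ : 0 < ρ)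
    (a : ℕ → ℝ)
    (ha : ∀ k, 1 ≤ k → k ≤ b →
      a k = ρ - (1 / m) * ∑ j ∈ Finset.Icc 1 (k - 1), a j)
    (d : ℕ → ℝ) (hd0 : ∀ k, 0 ≤ d k)
    (hd : ∀ k, 1 ≤ k → k ≤ b →
      d k > ρ - (1 / m) * ∑ j ∈ Finset.Icc 1 (k - 1), d j) :
    ∀ k, k ≤ b → ∑ j ∈ Finset.Icc 1 k, d j ≥ ∑ j ∈ Finset.Icc 1 k, a j :=
  pebbles_prefix_domination_general m hm b ρ a ha d hd
end
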